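/- For the path P_n with n ≥ 4 vertices, the eternal game chromatic number equals 4; in particular Bob has a winning strategy on P_4 when only 3 colors are available. -/

import Mathlib

open SimpleGraph

/-- A state of the eternal vertex coloring game: the current (partial) coloring,
the set of vertices already chosen in the current round, and whose turn it is. -/
structure EGState (V : Type) (k : ℕ) where
  col : V → Option (Fin k)
  played : Finset V
  aliceTurn : Bool

variable {V : Type} [Fintype V] [DecidableEq V]

/-- A move (vertex `v`, color `c`) is legal: `v` has not yet been chosen this round,
`c` differs from the current color of `v`, and `c` does not appear on a neighbor. -/
def EGLegal (G : SimpleGraph V) {k : ℕ} (s : EGState V k) (v : V) (c : Fin k) : Prop :=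
  v ∉ s.played ∧ s.col v ≠ some c ∧ ∀ u, G.Adj v u → s.col u ≠ some c

/-- The state after (re-)coloring `v` with `c`; the round resets when every vertex
has been chosen once. -/
def EGStep {k : ℕ} (s : EGState V k) (v : V) (c : Fin k) : EGState V k where
  col := Function.update s.col v (some c)
  played := if insert v s.played = Finset.univ then ∅ else insert v s.played
  aliceTurn := !s.aliceTurn

/-- Alice can survive `n` further moves: on her turn she has some legal move after
which she survives; on Bob's turn every vertex he might choose admits a legal color
(otherwise Bob wins by choosing a stuck vertex) and she survives every legal move of his. -/
def EGSurvives (G : SimpleGraph V) {k : ℕ} : ℕ → EGState V k → Prop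
  | 0, _ => True
  | n + 1, s =>
      if s.aliceTurn then
        ∃ v c, EGLegal G s v c ∧ EGSurvives G n (EGStep s v c)
      else
        (∀ v, v ∉ s.played → ∃ c, EGLegal G s v c) ∧
          ∀ v c, EGLegal G s v c → EGSurvives G n (EGStep s v c)

/-- The initial state: all vertices uncolored, Alice to move. -/
def EGInit (V : Type) (k : ℕ) : EGState V k := ⟨fun _ => none, ∅, true⟩

/-- Alice wins the eternal vertex coloring game on `G` with `k` colors
(the game is finitely branching, so winning is equivalent to surviving forever). -/
def AliceWinsEG (G : SimpleGraph V) (k : ℕ) : Prop :=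
  ∀ n, EGSurvives G n (EGInit V k)

/-- The eternal game chromatic number `χ_g^∞(G)`. -/
noncomputable def eternalGameChromatic (G : SimpleGraph V) : ℕ :=
  sInf {k | AliceWinsEG G k}

/-!
A vertex of a path has at most two neighbours, so with four colors the chosen vertex always has a
free color; since the round is reset as soon as every vertex has been played, some vertex is always
available, and Alice survives forever.

With fewer colors Bob wins. With one color he chooses a neighbour of Alice's first vertex; with two
he colors a vertex at distance two from it with the other color, blocking the vertex in between.
With three colors he answers Alice's first vertex `p` by giving its color to a vertex `q` at
distance three, along a path `p - m₁ - m₂ - q`. Every later move of the first round colors a fresh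
vertex properly, so when the round ends `m₁` and `m₂` each see three distinct colors; a single move
of Alice can free at most one of them, and Bob chooses the other. On `P₄` and `P₅` a middle vertex
has no vertex at distance three, and there Bob's win is found by searching the game tree.
-/

open Finset

instance EGLegal.decidable (G : SimpleGraph V) [DecidableRel G.Adj] {k : ℕ} (s : EGState V k)
    (v : V) (c : Fin k) : Decidable (EGLegal G s v c) := by
  unfold EGLegal; infer_instance

instance EGSurvives.decidable (G : SimpleGraph V) [DecidableRel G.Adj] {k : ℕ} :
    ∀ (n : ℕ) (s : EGState V k), Decidable (EGSurvives G n s)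
  | 0, _ => isTrue trivial
  | n + 1, s =>
    have : ∀ s' : EGState V k, Decidable (EGSurvives G n s') := EGSurvives.decidable G n
    decidable_of_iff
      (if s.aliceTurn then ∃ v c, EGLegal G s v c ∧ EGSurvives G n (EGStep s v c)
       else (∀ v, v ∉ s.played → ∃ c, EGLegal G s v c) ∧
          ∀ v c, EGLegal G s v c → EGSurvives G n (EGStep s v c)) Iff.rfl

instance pathGraph.decidableAdj (n : ℕ) : DecidableRel (pathGraph n).Adj := fun _ _ =>
  decidable_of_iff _ pathGraph_adj.symm

section Coloring

variable {α : Type} {G : SimpleGraph α} {k : ℕ}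

def IsProperPartialColoring (G : SimpleGraph α) (col : α → Option (Fin k)) : Prop :=
  ∀ ⦃u v⦄, G.Adj u v → ∀ c, col u = some c → col v ≠ some c

lemma IsProperPartialColoring.update [DecidableEq α] {col : α → Option (Fin k)}
    (h : IsProperPartialColoring G col) {v : α} {c : Fin k} (hc : ∀ u, G.Adj v u → col u ≠ some c) :
    IsProperPartialColoring G (Function.update col v (some c)) := by
  intro x y hxy e hx hy
  rcases eq_or_ne x v with rfl | hxv
  · rw [Function.update_self, Option.some_inj] at hx
    rw [Function.update_of_ne (G.ne_of_adj hxy).symm, ← hx] at hy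
    exact hc y hxy hy
  · rw [Function.update_of_ne hxv] at hx
    rcases eq_or_ne y v with rfl | hyv
    · rw [Function.update_self, Option.some_inj] at hy
      exact hc x hxy.symm (hy ▸ hx)
    · rw [Function.update_of_ne hyv] at hy
      exact h hxy e hx hy

def IsBlocked (G : SimpleGraph α) (col : α → Option (Fin k)) (v : α) : Prop :=
  ∀ c, col v = some c ∨ ∃ u, G.Adj v u ∧ col u = some c

lemma IsBlocked.not_egLegal {s : EGState α k} {v : α} (h : IsBlocked G s.col v) (c : Fin k) :
    ¬ EGLegal G s v c := by
  rintro ⟨-, hv, hnbr⟩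
  obtain hc | ⟨u, hvu, hu⟩ := h c
  exacts [hv hc, hnbr u hvu hu]

lemma IsBlocked.update_of_not_adj [DecidableEq α] {col : α → Option (Fin k)} {v x : α}
    (h : IsBlocked G col v) (hxv : x ≠ v) (hx : ¬ G.Adj v x) (e : Fin k) :
    IsBlocked G (Function.update col x (some e)) v := by
  intro c
  obtain hc | ⟨u, hvu, hu⟩ := h c
  · exact .inl (by rwa [Function.update_of_ne hxv.symm])
  · exact .inr ⟨u, hvu, by rwa [Function.update_of_ne fun hux : u = x => hx (hux ▸ hvu)]⟩

lemma IsBlocked.update_of_eq_none [DecidableEq α] {col : α → Option (Fin k)} {v x : α}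
    (h : IsBlocked G col v) (hx : col x = none) (e : Fin k) :
    IsBlocked G (Function.update col x (some e)) v := by
  have hne : ∀ {u c}, col u = some c → u ≠ x := fun hu hux => by simp [hux ▸ hu] at hx
  intro c
  obtain hc | ⟨u, hvu, hu⟩ := h c
  · exact .inl (by rwa [Function.update_of_ne (hne hc)])
  · exact .inr ⟨u, hvu, by rwa [Function.update_of_ne (hne hu)]⟩

structure IsTrap (G : SimpleGraph α) (p m₁ m₂ q : α) : Prop where
  adj_left : G.Adj p m₁
  adj_mid : G.Adj m₁ m₂
  adj_right : G.Adj m₂ q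
  not_adj_ends : ¬ G.Adj p q
  no_common_nbr : ∀ x, G.Adj m₁ x → ¬ G.Adj m₂ x

lemma IsTrap.symm {p m₁ m₂ q : α} (h : IsTrap G p m₁ m₂ q) : IsTrap G q m₂ m₁ p :=
  ⟨h.adj_right.symm, h.adj_mid.symm, h.adj_left.symm, fun hqp => h.not_adj_ends hqp.symm,
    fun x h₂ h₁ => h.no_common_nbr x h₁ h₂⟩

lemma IsTrap.ends_ne {p m₁ m₂ q : α} (h : IsTrap G p m₁ m₂ q) : p ≠ q := by
  rintro rfl
  exact h.no_common_nbr p h.adj_left.symm h.adj_right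

lemma IsTrap.isBlocked_left {p m₁ m₂ q : α} (h : IsTrap G p m₁ m₂ q)
    {col : α → Option (Fin 3)} (hcol : IsProperPartialColoring G col) {a : Fin 3}
    (hp : col p = some a) (hq : col q = some a) (h₁ : col m₁ ≠ none) (h₂ : col m₂ ≠ none) :
    IsBlocked G col m₁ := by
  obtain ⟨b, hb⟩ := Option.ne_none_iff_exists'.mp h₁
  obtain ⟨c, hc⟩ := Option.ne_none_iff_exists'.mp h₂
  have hab : a ≠ b := fun hab => hcol h.adj_left a hp (hab ▸ hb)
  have hbc : b ≠ c := fun hbc => hcol h.adj_mid b hb (hbc ▸ hc)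
  have hca : c ≠ a := fun hca => hcol h.adj_right c hc (hca ▸ hq)
  intro x
  obtain rfl | rfl | rfl : x = a ∨ x = b ∨ x = c := by omega
  exacts [.inr ⟨p, h.adj_left.symm, hp⟩, .inl hb, .inr ⟨m₂, h.adj_mid, hc⟩]

/-- In the first round every move colors a fresh vertex, so the played vertices are exactly the
colored ones. -/
structure IsFirstRound (G : SimpleGraph α) (s : EGState α k) : Prop where
  proper : IsProperPartialColoring G s.col
  mem_played_iff : ∀ v, v ∈ s.played ↔ s.col v ≠ none

lemma isFirstRound_egInit : IsFirstRound G (EGInit α k) :=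
  ⟨fun _ _ _ _ h => by simp [EGInit] at h, fun v => by simp [EGInit]⟩

lemma IsFirstRound.col_eq_none {s : EGState α k} (h : IsFirstRound G s) {v : α} {c : Fin k}
    (hvc : EGLegal G s v c) : s.col v = none :=
  not_not.mp fun hv => hvc.1 ((h.mem_played_iff v).mpr hv)

end Coloring

section Game

variable {G : SimpleGraph V} {k : ℕ}

@[simp] lemma egStep_col (s : EGState V k) (v : V) (c : Fin k) :
    (EGStep s v c).col = Function.update s.col v (some c) := rfl

@[simp] lemma egStep_aliceTurn (s : EGState V k) (v : V) (c : Fin k) :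
    (EGStep s v c).aliceTurn = !s.aliceTurn := rfl

lemma egStep_played_of_notMem {s : EGState V k} {u v : V} (hu : u ∉ insert v s.played)
    (c : Fin k) : (EGStep s v c).played = insert v s.played :=
  if_neg fun h : insert v s.played = univ => hu (h ▸ mem_univ u)

lemma notMem_egStep_played {s : EGState V k} {u v : V} (huv : u ≠ v) (hu : u ∉ s.played)
    (c : Fin k) : u ∉ (EGStep s v c).played := by
  unfold EGStep
  split_ifs <;> simp [huv, hu]

lemma egStep_played_ne_univ [Nonempty V] (s : EGState V k) (v : V) (c : Fin k) :
    (EGStep s v c).played ≠ univ := by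
  unfold EGStep
  split_ifs with h
  exacts [univ_nonempty.ne_empty.symm, h]

lemma egSurvives_succ_of_aliceTurn {s : EGState V k} {m : ℕ} (h : s.aliceTurn = true) :
    EGSurvives G (m + 1) s ↔ ∃ v c, EGLegal G s v c ∧ EGSurvives G m (EGStep s v c) := by
  simp [EGSurvives, h]

lemma egSurvives_succ_of_not_aliceTurn {s : EGState V k} {m : ℕ} (h : s.aliceTurn = false) :
    EGSurvives G (m + 1) s ↔ (∀ v, v ∉ s.played → ∃ c, EGLegal G s v c) ∧
      ∀ v c, EGLegal G s v c → EGSurvives G m (EGStep s v c) := by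
  simp [EGSurvives, h]

lemma EGSurvives.mono {m n : ℕ} (hmn : m ≤ n) {s : EGState V k} (h : EGSurvives G n s) :
    EGSurvives G m s := by
  induction n generalizing m s with
  | zero => obtain rfl := Nat.le_zero.mp hmn; trivial
  | succ n ih =>
    cases m with
    | zero => trivial
    | succ m =>
      cases hs : s.aliceTurn
      · rw [egSurvives_succ_of_not_aliceTurn hs] at h ⊢
        exact ⟨h.1, fun v c hvc => ih (by omega) (h.2 v c hvc)⟩
      · rw [egSurvives_succ_of_aliceTurn hs] at h ⊢
        obtain ⟨v, c, hvc, h⟩ := h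
        exact ⟨v, c, hvc, ih (by omega) h⟩

lemma not_egSurvives_succ_of_forall_egLegal {s : EGState V k} {m : ℕ} {u : V}
    (hu : u ∉ s.played) (h : ∀ v c, EGLegal G s v c → ¬ EGSurvives G m (EGStep s v c)) :
    ¬ EGSurvives G (m + 1) s := by
  cases hs : s.aliceTurn
  · rw [egSurvives_succ_of_not_aliceTurn hs]
    rintro ⟨hfree, hmoves⟩
    obtain ⟨c, hc⟩ := hfree u hu
    exact h u c hc (hmoves u c hc)
  · rw [egSurvives_succ_of_aliceTurn hs]
    rintro ⟨v, c, hc, hv⟩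
    exact h v c hc hv

lemma not_egSurvives_of_isBlocked {s : EGState V k} {m : ℕ} {v : V}
    (hturn : s.aliceTurn = false) (hv : v ∉ s.played) (h : IsBlocked G s.col v) :
    ¬ EGSurvives G (m + 1) s := by
  rw [egSurvives_succ_of_not_aliceTurn hturn]
  rintro ⟨hfree, -⟩
  obtain ⟨c, hc⟩ := hfree v hv
  exact h.not_egLegal c hc

lemma not_egSurvives_of_isBlocked_pair {s : EGState V k} {m : ℕ} {v₁ v₂ : V}
    (h₁ : IsBlocked G s.col v₁) (h₂ : IsBlocked G s.col v₂) (hv₁ : v₁ ∉ s.played)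
    (hv₂ : v₂ ∉ s.played) (hnbr : ∀ x, G.Adj v₁ x → ¬ G.Adj v₂ x) :
    ¬ EGSurvives G (m + 2) s := by
  cases hs : s.aliceTurn
  · exact not_egSurvives_of_isBlocked hs hv₁ h₁
  · rw [egSurvives_succ_of_aliceTurn hs]
    rintro ⟨x, e, hxe, hx⟩
    have hturn : (EGStep s x e).aliceTurn = false := by simp [hs]
    have hx₁ : x ≠ v₁ := by rintro rfl; exact h₁.not_egLegal e hxe
    have hx₂ : x ≠ v₂ := by rintro rfl; exact h₂.not_egLegal e hxe
    by_cases hadj : G.Adj v₁ x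
    · exact not_egSurvives_of_isBlocked hturn (notMem_egStep_played hx₂.symm hv₂ e)
        (h₂.update_of_not_adj hx₂ (hnbr x hadj) e) hx
    · exact not_egSurvives_of_isBlocked hturn (notMem_egStep_played hx₁.symm hv₁ e)
        (h₁.update_of_not_adj hx₁ hadj e) hx

end Game

lemma exists_egLegal_of_degree_add_two_le {α : Type} {G : SimpleGraph α} [G.LocallyFinite]
    {k : ℕ} (hk : ∀ v, G.degree v + 2 ≤ k) (s : EGState α k) {v : α} (hv : v ∉ s.played) :
    ∃ c, EGLegal G s v c := by
  set taken : Finset (Option (Fin k)) := insert (s.col v) ((G.neighborFinset v).image s.col)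
  have hcard : #taken < #((univ : Finset (Fin k)).map .some) :=
    calc #taken ≤ #((G.neighborFinset v).image s.col) + 1 := card_insert_le _ _
      _ ≤ G.degree v + 1 := by grw [card_image_le, card_neighborFinset_eq_degree]
      _ < #((univ : Finset (Fin k)).map .some) := by
        rw [card_map, card_univ, Fintype.card_fin]
        have := hk v
        omega
  obtain ⟨_, hc, hfree⟩ := exists_mem_notMem_of_card_lt_card hcard
  obtain ⟨c, -, rfl⟩ := mem_map.mp hc
  refine ⟨c, hv, fun h => hfree ?_, fun u hu h => hfree ?_⟩
  · simp [taken, h]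
  · simpa [taken] using .inr ⟨u, hu, h⟩

theorem aliceWinsEG_of_degree_add_two_le [Nonempty V] {G : SimpleGraph V} [G.LocallyFinite]
    {k : ℕ} (hk : ∀ v, G.degree v + 2 ≤ k) : AliceWinsEG G k := by
  suffices h : ∀ m (s : EGState V k), s.played ≠ univ → EGSurvives G m s from
    fun m => h m _ univ_nonempty.ne_empty.symm
  intro m
  induction m with
  | zero => exact fun _ _ => trivial
  | succ m ih =>
    intro s hs
    obtain ⟨v, hv⟩ : ∃ v, v ∉ s.played := by simpa [eq_univ_iff_forall] using hs
    cases ht : s.aliceTurn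
    · rw [egSurvives_succ_of_not_aliceTurn ht]
      exact ⟨fun u hu => exists_egLegal_of_degree_add_two_le hk s hu,
        fun u c _ => ih _ (egStep_played_ne_univ s u c)⟩
    · rw [egSurvives_succ_of_aliceTurn ht]
      obtain ⟨c, hc⟩ := exists_egLegal_of_degree_add_two_le hk s hv
      exact ⟨v, c, hc, ih _ (egStep_played_ne_univ s v c)⟩

lemma pathGraph_degree_le_two {n : ℕ} (v : Fin n) : (pathGraph n).degree v ≤ 2 := by
  have hle_one (f : ℕ → ℕ) : #({u : Fin n | u.val = f v.val} : Finset (Fin n)) ≤ 1 :=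
    card_le_one.mpr fun a ha b hb => Fin.ext (by simp only [mem_filter] at ha hb; omega)
  calc (pathGraph n).degree v
      = #((pathGraph n).neighborFinset v) := (card_neighborFinset_eq_degree _ _).symm
    _ ≤ #(({u | u.val = v.val - 1} : Finset (Fin n)) ∪ ({u | u.val = v.val + 1} : Finset _)) := by
        refine card_le_card fun u hu => ?_
        simp only [mem_neighborFinset, pathGraph_adj] at hu
        simp only [mem_union, mem_filter, mem_univ, true_and]
        omega
    _ ≤ 2 := (card_union_le _ _).trans (add_le_add (hle_one (· - 1)) (hle_one (· + 1)))

section FirstRound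

variable {G : SimpleGraph V} {k : ℕ} {s : EGState V k}

lemma IsFirstRound.egStep (h : IsFirstRound G s) {v : V} {c : Fin k} (hvc : EGLegal G s v c)
    {u : V} (huv : u ≠ v) (hu : s.col u = none) : IsFirstRound G (EGStep s v c) := by
  have hu' : u ∉ insert v s.played := by simp [huv, h.mem_played_iff, hu]
  refine ⟨h.proper.update hvc.2.2, fun x => ?_⟩
  rw [egStep_played_of_notMem hu', mem_insert, h.mem_played_iff, egStep_col]
  rcases eq_or_ne x v with rfl | hxv
  · simp
  · simp [hxv]

lemma IsFirstRound.egStep_played_of_forall_ne (h : IsFirstRound G s) {v : V}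
    (hothers : ∀ u ≠ v, s.col u ≠ none) (c : Fin k) : (EGStep s v c).played = ∅ := by
  have hall : insert v s.played = univ := eq_univ_of_forall fun u => by
    rcases eq_or_ne u v with rfl | huv
    · exact mem_insert_self _ _
    · exact mem_insert_of_mem ((h.mem_played_iff u).mpr (hothers u huv))
  simp [EGStep, hall]

lemma egStep_col_of_col_eq_none {v y : V} {b c : Fin k} (hv : s.col v = none)
    (hy : s.col y = some b) : (EGStep s v c).col y = some b := by
  rwa [egStep_col, Function.update_of_ne (by rintro rfl; simp [hv] at hy)]

lemma filter_egStep_col_eq_none (v : V) (c : Fin k) :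
    ({u | (EGStep s v c).col u = none} : Finset V) =
      ({u | s.col u = none} : Finset V).erase v := by
  ext u
  simp only [mem_filter, mem_univ, true_and, mem_erase]
  rcases eq_or_ne u v with rfl | huv
  · simp
  · simp [huv]

end FirstRound

lemma IsTrap.not_egSurvives {G : SimpleGraph V} {p m₁ m₂ q : V} (htrap : IsTrap G p m₁ m₂ q)
    {a : Fin 3} (r : ℕ) (s : EGState V 3) (hs : IsFirstRound G s) (hp : s.col p = some a)
    (hq : s.col q = some a) (hr : #({v | s.col v = none} : Finset V) = r + 1) :
    ¬ EGSurvives G (r + 3) s := by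
  obtain ⟨v, hv⟩ : ({v | s.col v = none} : Finset V).Nonempty := card_pos.mp (by omega)
  have hv' : v ∉ s.played := by simpa [hs.mem_played_iff] using hv
  refine not_egSurvives_succ_of_forall_egLegal hv' fun x c hxc => ?_
  have hx := hs.col_eq_none hxc
  have hp' := egStep_col_of_col_eq_none (c := c) hx hp
  have hq' := egStep_col_of_col_eq_none (c := c) hx hq
  have hcard : #({u | (EGStep s x c).col u = none} : Finset V) = r := by
    rw [filter_egStep_col_eq_none, card_erase_of_mem (by simpa using hx), hr, r.add_sub_cancel]
  cases r with
  | zero =>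
    have hfull : ∀ u, (EGStep s x c).col u ≠ none := fun u =>
      by simpa using filter_eq_empty_iff.mp (card_eq_zero.mp hcard) (mem_univ u)
    have hothers : ∀ u ≠ x, s.col u ≠ none := fun u hux hu =>
      hfull u (by rwa [egStep_col, Function.update_of_ne hux])
    have hproper := hs.proper.update hxc.2.2
    have hplayed := hs.egStep_played_of_forall_ne hothers c
    exact not_egSurvives_of_isBlocked_pair
      (htrap.isBlocked_left hproper hp' hq' (hfull _) (hfull _))
      (htrap.symm.isBlocked_left hproper hq' hp' (hfull _) (hfull _))
      (by simp [hplayed]) (by simp [hplayed]) htrap.no_common_nbr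
  | succ r =>
    obtain ⟨u, hu, hux⟩ := exists_mem_ne (by omega : 1 < #({u | s.col u = none} : Finset V)) x
    exact htrap.not_egSurvives r _ (hs.egStep hxc hux (by simpa using hu)) hp' hq' hcard

section BobWins

variable {G : SimpleGraph V}

theorem not_aliceWinsEG_zero : ¬ AliceWinsEG G 0 := fun h =>
  let ⟨_, c, _⟩ := (egSurvives_succ_of_aliceTurn rfl).mp (h 1)
  c.elim0

theorem not_aliceWinsEG_one (h : ∀ v, ∃ u, G.Adj v u) : ¬ AliceWinsEG G 1 := by
  intro hwin
  obtain ⟨v, c, -, hv⟩ := (egSurvives_succ_of_aliceTurn rfl).mp (hwin 2)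
  obtain ⟨u, hvu⟩ := h v
  refine not_egSurvives_of_isBlocked rfl (notMem_egStep_played hvu.ne.symm (notMem_empty u) c)
    (fun e => .inr ⟨v, hvu.symm, ?_⟩) hv
  simp [Subsingleton.elim e c]

theorem not_aliceWinsEG_two (h : ∀ v, ∃ m w, G.Adj v m ∧ G.Adj m w ∧ w ≠ v) :
    ¬ AliceWinsEG G 2 := by
  intro hwin
  obtain ⟨v, c, hvc, h₁⟩ := (egSurvives_succ_of_aliceTurn rfl).mp (hwin 4)
  obtain ⟨m, w, hvm, hmw, hwv⟩ := h v
  obtain ⟨d, hdc⟩ : ∃ d : Fin 2, d ≠ c := ⟨c + 1, by omega⟩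
  set s₁ := EGStep (EGInit V 2) v c
  have hs₁ : IsFirstRound G s₁ := isFirstRound_egInit.egStep hvc hvm.ne.symm rfl
  have hwd : EGLegal G s₁ w d := by
    refine ⟨by rw [hs₁.mem_played_iff]; simp [s₁, hwv, EGInit], by simp [s₁, hwv, EGInit],
      fun u _ => ?_⟩
    rcases eq_or_ne u v with rfl | huv
    · simp [s₁, hdc.symm]
    · simp [s₁, huv, EGInit]
  obtain ⟨-, h₁⟩ := (egSurvives_succ_of_not_aliceTurn rfl).mp h₁
  set s₂ := EGStep s₁ w d
  have hm₂ : s₂.col m = none := by simp [s₂, s₁, EGInit, hmw.ne, hvm.ne.symm]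
  have hs₂ : IsFirstRound G s₂ := hs₁.egStep hwd hmw.ne (by simp [s₁, EGInit, hvm.ne.symm])
  have hm : IsBlocked G s₂.col m := fun e => .inr <| by
    obtain rfl | rfl : e = c ∨ e = d := by omega
    exacts [⟨v, hvm.symm, by simp [s₂, s₁, hwv.symm]⟩, ⟨w, hmw, by simp [s₂]⟩]
  obtain ⟨x, e, hxe, h₃⟩ := (egSurvives_succ_of_aliceTurn rfl).mp (h₁ w d hwd)
  have hxm : x ≠ m := by rintro rfl; exact hm.not_egLegal e hxe
  exact not_egSurvives_of_isBlocked rfl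
    (notMem_egStep_played hxm.symm (by simp [hs₂.mem_played_iff, hm₂]) e)
    (hm.update_of_eq_none (hs₂.col_eq_none hxe) e) h₃

theorem not_aliceWinsEG_three (h : ∀ p, ∃ m₁ m₂ q, IsTrap G p m₁ m₂ q) : ¬ AliceWinsEG G 3 := by
  intro hwin
  obtain ⟨p, a, hpa, h₁⟩ :=
    (egSurvives_succ_of_aliceTurn rfl).mp (hwin (Fintype.card V + 2 + 1 + 1))
  obtain ⟨m₁, m₂, q, htrap⟩ := h p
  have hqp : q ≠ p := htrap.ends_ne.symm
  set s₁ := EGStep (EGInit V 3) p a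
  have hs₁ : IsFirstRound G s₁ := isFirstRound_egInit.egStep hpa hqp rfl
  have hqa : EGLegal G s₁ q a := by
    refine ⟨by rw [hs₁.mem_played_iff]; simp [s₁, hqp, EGInit], by simp [s₁, hqp, EGInit], ?_⟩
    intro u hqu
    have hup : u ≠ p := by rintro rfl; exact htrap.not_adj_ends hqu.symm
    simp [s₁, hup, EGInit]
  obtain ⟨-, h₁⟩ := (egSurvives_succ_of_not_aliceTurn rfl).mp h₁
  set s₂ := EGStep s₁ q a
  have hm₁p : m₁ ≠ p := htrap.adj_left.ne.symm
  have hm₁q : m₁ ≠ q := by rintro rfl; exact htrap.not_adj_ends htrap.adj_left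
  have hm₁ : s₂.col m₁ = none := by simp [s₂, s₁, EGInit, hm₁p, hm₁q]
  have hs₂ : IsFirstRound G s₂ := hs₁.egStep hqa hm₁q (by simp [s₁, EGInit, hm₁p])
  obtain ⟨r, hr⟩ := Nat.exists_eq_add_one_of_ne_zero
    (card_ne_zero_of_mem (s := ({v | s₂.col v = none} : Finset V)) (by simpa using hm₁))
  refine htrap.not_egSurvives (a := a) r s₂ hs₂ (by simp [s₂, s₁, hqp.symm]) (by simp [s₂]) hr ?_
  refine (h₁ q a hqa).mono ?_
  have := hr ▸ card_le_univ ({v | s₂.col v = none} : Finset V)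
  omega

end BobWins

section Path

variable {n : ℕ}

lemma pathGraph_exists_adj_adj (hn : 4 ≤ n) (v : Fin n) :
    ∃ m w, (pathGraph n).Adj v m ∧ (pathGraph n).Adj m w ∧ w ≠ v := by
  by_cases h : v.val + 2 < n
  · refine ⟨⟨v + 1, by omega⟩, ⟨v + 2, h⟩, ?_, ?_, ?_⟩ <;> grind [pathGraph_adj]
  · refine ⟨⟨v - 1, by omega⟩, ⟨v - 2, by omega⟩, ?_, ?_, ?_⟩ <;> grind [pathGraph_adj]

lemma pathGraph_isTrap {p m₁ m₂ q : Fin n} (h₁ : m₁.val = p + 1) (h₂ : m₂.val = p + 2)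
    (h₃ : q.val = p + 3) : IsTrap (pathGraph n) p m₁ m₂ q := by
  refine ⟨?_, ?_, ?_, ?_, fun x hx₁ hx₂ => ?_⟩ <;> simp only [pathGraph_adj] at * <;> omega

lemma pathGraph_exists_isTrap (hn : 6 ≤ n) (p : Fin n) :
    ∃ m₁ m₂ q, IsTrap (pathGraph n) p m₁ m₂ q := by
  by_cases h : p.val + 3 < n
  · exact ⟨⟨p + 1, by omega⟩, ⟨p + 2, by omega⟩, ⟨p + 3, h⟩, pathGraph_isTrap rfl rfl rfl⟩
  · exact ⟨⟨p - 1, by omega⟩, ⟨p - 2, by omega⟩, ⟨p - 3, by omega⟩,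
      (pathGraph_isTrap (p := ⟨p - 3, by omega⟩) (by simp only; omega)
        (by simp only; omega) (by simp only; omega)).symm⟩

set_option maxRecDepth 40000 in
lemma not_egSurvives_pathGraph_four_three : ¬ EGSurvives (pathGraph 4) 8 (EGInit (Fin 4) 3) := by
  decide

set_option maxRecDepth 40000 in
lemma not_egSurvives_pathGraph_five_three : ¬ EGSurvives (pathGraph 5) 7 (EGInit (Fin 5) 3) := by
  decide

theorem not_aliceWinsEG_pathGraph_three (hn : 4 ≤ n) : ¬ AliceWinsEG (pathGraph n) 3 := by
  obtain rfl | rfl | hn : n = 4 ∨ n = 5 ∨ 6 ≤ n := by omega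
  · exact fun h => not_egSurvives_pathGraph_four_three (h 8)
  · exact fun h => not_egSurvives_pathGraph_five_three (h 7)
  · exact not_aliceWinsEG_three (pathGraph_exists_isTrap hn)

theorem not_aliceWinsEG_pathGraph_of_lt_four (hn : 4 ≤ n) {k : ℕ} (hk : k < 4) :
    ¬ AliceWinsEG (pathGraph n) k := by
  interval_cases k
  · exact not_aliceWinsEG_zero
  · exact not_aliceWinsEG_one fun v =>
      let ⟨m, _, hvm, _⟩ := pathGraph_exists_adj_adj hn v
      ⟨m, hvm⟩
  · exact not_aliceWinsEG_two (pathGraph_exists_adj_adj hn)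
  · exact not_aliceWinsEG_pathGraph_three hn

theorem aliceWinsEG_pathGraph_four [NeZero n] : AliceWinsEG (pathGraph n) 4 :=
  aliceWinsEG_of_degree_add_two_le fun v => by have := pathGraph_degree_le_two v; omega

end Path

/-- For n ≥ 4, χ_g^∞(P_n) = 4; in particular Bob wins on P_4 with only 3 colors. -/
theorem eternal_game_chromatic_path (n : ℕ) (hn : 4 ≤ n) :
    IsLeast {k | AliceWinsEG (pathGraph n) k} 4 ∧ ¬ AliceWinsEG (pathGraph 4) 3 := by
  have : NeZero n := ⟨by omega⟩
  refine ⟨⟨aliceWinsEG_pathGraph_four, fun k hk => ?_⟩, not_aliceWinsEG_pathGraph_three le_rfl⟩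
  by_contra! hk4
  exact not_aliceWinsEG_pathGraph_of_lt_four hn hk4 hk
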